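/- arXiv:1311.0851 — 2 statements merged into one kernel-verified Lean document; each statement's English description precedes it below -/
import Mathlib

section
/- Let ℓ > 1, c, s ≥ 0 with c² + s² = 1, s > 0, A = diag(ℓ, 1), and for η ≥ 1 let B(η) = [[1+(η−1)c², (η−1)cs], [(η−1)cs, 1+(η−1)s²]]. Then the function η ↦ ‖A⁻¹ − B(η)⁻¹‖_F² over η ≥ 1 is uniquely minimized at η* = ℓ/(c² + ℓs²). -/
/-!
With `u = (c, s)` a unit vector, `B η = 1 + (η - 1) • u uᵀ`, whose inverse is
`1 + (η⁻¹ - 1) • u uᵀ` because `u uᵀ` is idempotent. Expanding the Frobenius norm, the loss is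
`(η⁻¹ - 1 - (ℓ⁻¹ - 1) c²)² + (ℓ⁻¹ - 1)² (1 - c⁴)`, so it is minimised exactly where
`η⁻¹ = 1 + (ℓ⁻¹ - 1) c² = (c² + ℓ s²) / ℓ`.
-/

open Matrix

theorem Matrix.inv_one_add_smul_vecMulVec_self {n K : Type*} [Fintype n] [DecidableEq n]
    [Field K] {u : n → K} (hu : u ⬝ᵥ u = 1) {η : K} (hη : η ≠ 0) :
    (1 + (η - 1) • vecMulVec u u)⁻¹ = 1 + (η⁻¹ - 1) • vecMulVec u u := by
  refine inv_eq_right_inv ?_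
  have hP : vecMulVec u u * vecMulVec u u = vecMulVec u u := by
    rw [vecMulVec_mul_vecMulVec, hu, one_smul]
  have hcoeff : (η - 1) + (η⁻¹ - 1) + (η - 1) * (η⁻¹ - 1) = 0 := by
    field_simp
    ring
  calc (1 + (η - 1) • vecMulVec u u) * (1 + (η⁻¹ - 1) • vecMulVec u u)
      = 1 + ((η - 1) + (η⁻¹ - 1) + (η - 1) * (η⁻¹ - 1)) • vecMulVec u u := by
        simp only [add_mul, mul_add, one_mul, mul_one, smul_mul_smul_comm, hP, add_smul,
          mul_smul]
        abel
    _ = 1 := by rw [hcoeff, zero_smul, add_zero]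

theorem Matrix.inv_fin_two_diag {K : Type*} [Field K] {a b : K} (ha : a ≠ 0) (hb : b ≠ 0) :
    (!![a, 0; 0, b])⁻¹ = !![a⁻¹, 0; 0, b⁻¹] := by
  refine inv_eq_right_inv ?_
  rw [mul_fin_two, one_fin_two]
  simp [ha, hb]

theorem Matrix.fin_two_eq_one_add_smul_vecMulVec {R : Type*} [CommRing R] (c s η : R) :
    !![1 + (η - 1) * c^2, (η - 1) * c * s; (η - 1) * c * s, 1 + (η - 1) * s^2] =
      1 + (η - 1) • vecMulVec ![c, s] ![c, s] := by
  ext i j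
  fin_cases i <;> fin_cases j <;> simp [sq, mul_assoc, mul_comm s c]

theorem Matrix.sum_sq_diag_sub_one_add_smul_vecMulVec {R : Type*} [CommRing R] {c s : R}
    (h : c^2 + s^2 = 1) (a t : R) :
    ∑ i : Fin 2, ∑ j : Fin 2, ((!![a, 0; 0, 1] - (1 + t • vecMulVec ![c, s] ![c, s])) i j)^2 =
      (t - (a - 1) * c^2)^2 + (a - 1)^2 * (1 - c^4) := by
  simp [Fin.sum_univ_two]
  linear_combination t^2 * (c^2 + s^2 + 1) * h

theorem frobenius_precision_loss_optimal_shrinker_general (ℓ c s : ℝ) (hℓ : 1 < ℓ)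
    (h : c^2 + s^2 = 1) :
    let A : Matrix (Fin 2) (Fin 2) ℝ := !![ℓ, 0; 0, 1]
    let B : ℝ → Matrix (Fin 2) (Fin 2) ℝ := fun η =>
      !![1 + (η - 1) * c^2, (η - 1) * c * s; (η - 1) * c * s, 1 + (η - 1) * s^2]
    let F : ℝ → ℝ := fun η => ∑ i : Fin 2, ∑ j : Fin 2, ((A⁻¹ - (B η)⁻¹) i j)^2
    (∀ η : ℝ, 1 ≤ η → F (ℓ / (c^2 + ℓ * s^2)) ≤ F η) ∧
    (∀ η : ℝ, 1 ≤ η → F η = F (ℓ / (c^2 + ℓ * s^2)) → η = ℓ / (c^2 + ℓ * s^2)) := by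
  intro A B F
  have hu : ![c, s] ⬝ᵥ ![c, s] = 1 := by simp [dotProduct, Fin.sum_univ_two, ← h, sq]
  set g : ℝ → ℝ := fun η => η⁻¹ - 1 - (ℓ⁻¹ - 1) * c^2
  have hF : ∀ η ≠ 0, F η = g η ^ 2 + (ℓ⁻¹ - 1)^2 * (1 - c^4) := fun η hη => by
    simp only [F, A, B, inv_fin_two_diag (by positivity : ℓ ≠ 0) one_ne_zero, inv_one,
      fin_two_eq_one_add_smul_vecMulVec, inv_one_add_smul_vecMulVec_self hu hη]
    exact sum_sq_diag_sub_one_add_smul_vecMulVec h _ _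
  have hstar_ne : ℓ / (c^2 + ℓ * s^2) ≠ 0 := by
    have : 0 < c^2 + ℓ * s^2 := by nlinarith [sq_nonneg c, sq_nonneg s]
    positivity
  have hg_star : g (ℓ / (c^2 + ℓ * s^2)) = 0 := by
    simp only [g, inv_div]
    field_simp
    linear_combination ℓ * h
  have hF_star : F (ℓ / (c^2 + ℓ * s^2)) = (ℓ⁻¹ - 1)^2 * (1 - c^4) := by
    rw [hF _ hstar_ne, hg_star]
    ring
  refine ⟨fun η hη => ?_, fun η hη hFη => ?_⟩
  · rw [hF_star, hF η (by positivity)]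
    linarith [sq_nonneg (g η)]
  · rw [hF_star, hF η (by positivity)] at hFη
    have hgη : g η = 0 := pow_eq_zero_iff two_ne_zero |>.mp (by linarith)
    exact inv_injective (by simp only [g] at hgη hg_star; linarith)

theorem frobenius_precision_loss_optimal_shrinker (ℓ c s : ℝ) (hℓ : 1 < ℓ)
    (hc : 0 ≤ c) (hs : 0 < s) (h : c^2 + s^2 = 1) :
    let A : Matrix (Fin 2) (Fin 2) ℝ := !![ℓ, 0; 0, 1]
    let B : ℝ → Matrix (Fin 2) (Fin 2) ℝ := fun η =>
      !![1 + (η - 1) * c^2, (η - 1) * c * s; (η - 1) * c * s, 1 + (η - 1) * s^2]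
    let F : ℝ → ℝ := fun η => ∑ i : Fin 2, ∑ j : Fin 2, ((A⁻¹ - (B η)⁻¹) i j)^2
    (∀ η : ℝ, 1 ≤ η → F (ℓ / (c^2 + ℓ * s^2)) ≤ F η) ∧
    (∀ η : ℝ, 1 ≤ η → F η = F (ℓ / (c^2 + ℓ * s^2)) → η = ℓ / (c^2 + ℓ * s^2)) :=
  frobenius_precision_loss_optimal_shrinker_general ℓ c s hℓ h
end

section
/- Let ℓ > 1, c, s ≥ 0 with c² + s² = 1, s > 0, A = diag(ℓ,1), and B(η) = [[1+(η−1)c², (η−1)cs], [(η−1)cs, 1+(η−1)s²]]. Then the operator norm ‖A − B(η)‖_op, as a function of η ≥ 1, is minimized at η = ℓ. Specifically, the eigenvalues λ±(η) of A − B(η) satisfy: λ₊(η) ≥ 0 ≥ λ₋(η) for all η ≥ 1; λ₊(η) ≥ −λ₋(η) for η ≤ ℓ and λ₊(η) ≤ −λ₋(η) for η ≥ ℓ; λ₊ is decreasing in η on [1,ℓ] and −λ₋ is increasing on [ℓ,∞). -/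
/-!
The discriminant of the characteristic polynomial of `A - B(η)` is `(η - m)² + (2(ℓ-1)cs)²`
with `m = ℓ - 2(ℓ-1)s²`, so its square root `R η` is a 1-Lipschitz function of `η`. Since `λ₊ = (ℓ - η + R η) / 2` and
`-λ₋ = (η - ℓ + R η) / 2`, the first is antitone and the second monotone on all of `ℝ`, and the
operator norm `max λ₊ (-λ₋) = (|ℓ - η| + R η) / 2` is at least `R ℓ / 2`, its value at `η = ℓ`.
-/

open Real

theorem sqrt_sq_add_le_sqrt_sq_add_add_abs_sub (x y r : ℝ) (hr : 0 ≤ r) :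
    √(x ^ 2 + r) ≤ √(y ^ 2 + r) + |x - y| := by
  have hy : |y| ≤ √(y ^ 2 + r) := by
    rw [← sqrt_sq_eq_abs]
    exact sqrt_le_sqrt (by linarith)
  apply sqrt_le_iff.2 ⟨by positivity, _⟩
  have hyr : √(y ^ 2 + r) ^ 2 = y ^ 2 + r := sq_sqrt (by positivity)
  have hcross : y * (x - y) ≤ √(y ^ 2 + r) * |x - y| := by
    calc y * (x - y) ≤ |y * (x - y)| := le_abs_self _
      _ = |y| * |x - y| := abs_mul _ _
      _ ≤ √(y ^ 2 + r) * |x - y| := mul_le_mul_of_nonneg_right hy (abs_nonneg _)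
  nlinarith [sq_abs (x - y)]

theorem quadratic_roots_sign_of_const_nonpos {t d : ℝ} (hd : d ≤ 0) :
    0 ≤ (t + √(t ^ 2 - 4 * d)) / 2 ∧ (t - √(t ^ 2 - 4 * d)) / 2 ≤ 0 := by
  have ht : |t| ≤ √(t ^ 2 - 4 * d) := by
    rw [← sqrt_sq_eq_abs]
    exact sqrt_le_sqrt (by linarith)
  constructor <;> linarith [abs_le.1 ht]

theorem operator_loss_optimal_shrinker_general (ℓ c s : ℝ) (hℓ : 1 < ℓ)
    (h : c^2 + s^2 = 1) :
    let t : ℝ → ℝ := fun η => (ℓ - 1) - (η - 1)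
    let d : ℝ → ℝ := fun η => -(ℓ - 1) * (η - 1) * s^2
    let lamPlus : ℝ → ℝ := fun η => (t η + Real.sqrt ((t η)^2 - 4 * d η)) / 2
    let lamMinus : ℝ → ℝ := fun η => (t η - Real.sqrt ((t η)^2 - 4 * d η)) / 2
    (∀ η : ℝ, 1 ≤ η → 0 ≤ lamPlus η ∧ lamMinus η ≤ 0) ∧
    (∀ η : ℝ, 1 ≤ η → η ≤ ℓ → -lamMinus η ≤ lamPlus η) ∧
    (∀ η : ℝ, ℓ ≤ η → lamPlus η ≤ -lamMinus η) ∧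
    AntitoneOn lamPlus (Set.Icc 1 ℓ) ∧
    MonotoneOn (fun η => -lamMinus η) (Set.Ici ℓ) ∧
    (∀ η : ℝ, 1 ≤ η →
      max (lamPlus ℓ) (-lamMinus ℓ) ≤ max (lamPlus η) (-lamMinus η)) := by
  intro t d lamPlus lamMinus
  set m := ℓ - 2 * (ℓ - 1) * s ^ 2
  set R : ℝ → ℝ := fun η => √((η - m) ^ 2 + (2 * (ℓ - 1) * c * s) ^ 2)
  have hdisc : ∀ η, t η ^ 2 - 4 * d η = (η - m) ^ 2 + (2 * (ℓ - 1) * c * s) ^ 2 := fun η => by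
    simp only [t, d, m]
    linear_combination (-4 * (ℓ - 1) ^ 2 * s ^ 2) * h
  have hplus : ∀ η, lamPlus η = (ℓ - η + R η) / 2 := fun η => by
    simp only [lamPlus, hdisc, R, t]; ring
  have hminus : ∀ η, -lamMinus η = (η - ℓ + R η) / 2 := fun η => by
    simp only [lamMinus, hdisc, R, t]; ring
  have hR : ∀ a b, R a ≤ R b + |a - b| := fun a b => by
    simpa only [R, sub_sub_sub_cancel_right] using
      sqrt_sq_add_le_sqrt_sq_add_add_abs_sub (a - m) (b - m) _ (sq_nonneg (2 * (ℓ - 1) * c * s))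
  refine ⟨fun η hη => quadratic_roots_sign_of_const_nonpos ?_, fun η _ hηℓ => ?_, fun η hℓη => ?_,
    fun a _ b _ hab => ?_, fun a _ b _ hab => ?_, fun η _ => ?_⟩
  · have : 0 ≤ (ℓ - 1) * (η - 1) * s ^ 2 :=
      mul_nonneg (mul_nonneg (by linarith) (by linarith)) (sq_nonneg s)
    simp only [d]; linarith
  · rw [hplus, hminus]; linarith
  · rw [hplus, hminus]; linarith
  · have := hR b a
    rw [abs_of_nonneg (sub_nonneg.2 hab)] at this
    rw [hplus, hplus]; linarith
  · have := hR a b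
    rw [abs_of_nonpos (sub_nonpos.2 hab)] at this
    simp only [hminus]; linarith
  · have := hR ℓ η
    rw [hplus, hminus, hplus, hminus, max_self]
    rcases le_total η ℓ with hηℓ | hℓη
    · rw [abs_of_nonneg (sub_nonneg.2 hηℓ)] at this
      exact le_max_of_le_left (by linarith)
    · rw [abs_of_nonpos (sub_nonpos.2 hℓη)] at this
      exact le_max_of_le_right (by linarith)

theorem operator_loss_optimal_shrinker (ℓ c s : ℝ) (hℓ : 1 < ℓ)
    (hc : 0 ≤ c) (hs : 0 < s) (h : c^2 + s^2 = 1) :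
    let t : ℝ → ℝ := fun η => (ℓ - 1) - (η - 1)
    let d : ℝ → ℝ := fun η => -(ℓ - 1) * (η - 1) * s^2
    let lamPlus : ℝ → ℝ := fun η => (t η + Real.sqrt ((t η)^2 - 4 * d η)) / 2
    let lamMinus : ℝ → ℝ := fun η => (t η - Real.sqrt ((t η)^2 - 4 * d η)) / 2
    (∀ η : ℝ, 1 ≤ η → 0 ≤ lamPlus η ∧ lamMinus η ≤ 0) ∧
    (∀ η : ℝ, 1 ≤ η → η ≤ ℓ → -lamMinus η ≤ lamPlus η) ∧
    (∀ η : ℝ, ℓ ≤ η → lamPlus η ≤ -lamMinus η) ∧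
    AntitoneOn lamPlus (Set.Icc 1 ℓ) ∧
    MonotoneOn (fun η => -lamMinus η) (Set.Ici ℓ) ∧
    (∀ η : ℝ, 1 ≤ η →
      max (lamPlus ℓ) (-lamMinus ℓ) ≤ max (lamPlus η) (-lamMinus η)) :=
  operator_loss_optimal_shrinker_general ℓ c s hℓ h
end
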